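/- Let H be a Hilbert space with dim H = 2n. Two rank-n orthogonal projections P, Q on H are complementary (i.e., im P + im Q = H) if and only if ‖(I − P) − Q‖ < 1. -/

import Mathlib

/-- `P` is an orthogonal projection of rank `n` on a Hilbert space. -/
def IsOrthProjOfRank {𝕜 H : Type*} [RCLike 𝕜] [NormedAddCommGroup H]
    [InnerProductSpace 𝕜 H] [CompleteSpace H] (n : ℕ) (P : H →L[𝕜] H) : Prop :=
  IsSelfAdjoint P ∧ P ∘L P = P ∧ Module.finrank 𝕜 (LinearMap.range (P : H →ₗ[𝕜] H)) = n

/-!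
Put `T = (1 - P) - Q` and `D = P - Q`. Idempotency of `P` and `Q` gives `T² + D² = 1`, and since
both are self-adjoint, `‖T x‖² + ‖D x‖² = ‖x‖²`. Hence `‖T‖ < 1` iff `D` is bounded below, which in
finite dimension means `D` injective. If `P x = Q x`, this vector lies in `im P ⊓ im Q`, and once it
vanishes `x` lies in `ker P ⊓ ker Q = (im P ⊔ im Q)ᗮ`; so `D` is injective iff `im P` and `im Q`
are complementary. For two `n`-dimensional subspaces of a `2n`-dimensional space, complementarity
is just `im P ⊔ im Q = ⊤`.
-/

open Module ContinuousLinearMap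

theorem Submodule.sup_eq_top_iff_isCompl_of_finrank_add_eq {K V : Type*} [DivisionRing K]
    [AddCommGroup V] [Module K V] [FiniteDimensional K V] {U W : Submodule K V}
    (h : finrank K U + finrank K W = finrank K V) : U ⊔ W = ⊤ ↔ IsCompl U W := by
  refine ⟨fun hsup => ⟨?_, codisjoint_iff.mpr hsup⟩, fun hUW => hUW.codisjoint.eq_top⟩
  have := finrank_sup_add_finrank_inf_eq U W
  rw [hsup, finrank_top] at this
  rw [disjoint_iff, ← finrank_eq_zero]
  omega

theorem IsIdempotentElem.one_sub_sub_mul_self_add_sub_mul_self {R : Type*} [Ring R] {p q : R}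
    (hp : IsIdempotentElem p) (hq : IsIdempotentElem q) :
    (1 - p - q) * (1 - p - q) + (p - q) * (p - q) = 1 := by
  simp only [mul_sub, sub_mul, one_mul, mul_one, hp.eq, hq.eq]
  abel

theorem ContinuousLinearMap.norm_lt_one_iff_injective_of_norm_sq_add_norm_sq_eq
    {𝕜 E F G : Type*} [NontriviallyNormedField 𝕜] [CompleteSpace 𝕜]
    [NormedAddCommGroup E] [NormedSpace 𝕜 E] [FiniteDimensional 𝕜 E]
    [NormedAddCommGroup F] [NormedSpace 𝕜 F] [NormedAddCommGroup G] [NormedSpace 𝕜 G]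
    {S : E →L[𝕜] F} {T : E →L[𝕜] G} (h : ∀ x, ‖S x‖ ^ 2 + ‖T x‖ ^ 2 = ‖x‖ ^ 2) :
    ‖S‖ < 1 ↔ Function.Injective T := by
  constructor
  · intro hS
    refine (injective_iff_map_eq_zero T).mpr fun x hx => norm_eq_zero.mp ?_
    have hSx : ‖S x‖ = ‖x‖ := by
      have := h x
      rw [hx, norm_zero] at this
      exact (pow_left_inj₀ (norm_nonneg _) (norm_nonneg _) two_ne_zero).mp (by simpa using this)
    have := S.le_opNorm x
    nlinarith [norm_nonneg x]
  · intro hT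
    obtain ⟨c, hc, hcT⟩ := antilipschitzWith_iff_exists_mul_le_norm.mp
      (((T : E →ₗ[𝕜] G).exists_antilipschitzWith (LinearMap.ker_eq_bot.mpr hT)).imp
        fun _ => And.right)
    have hbound : ‖S‖ ≤ √(1 - c ^ 2) := by
      refine opNorm_le_bound _ (Real.sqrt_nonneg _) fun x => ?_
      have hTx : (c * ‖x‖) ^ 2 ≤ ‖T x‖ ^ 2 := pow_le_pow_left₀ (by positivity) (hcT x) 2
      calc ‖S x‖ = √(‖S x‖ ^ 2) := (Real.sqrt_sq (norm_nonneg _)).symm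
        _ ≤ √((1 - c ^ 2) * ‖x‖ ^ 2) := Real.sqrt_le_sqrt (by nlinarith [h x])
        _ = √(1 - c ^ 2) * ‖x‖ := by
          rw [Real.sqrt_mul' _ (sq_nonneg _), Real.sqrt_sq (norm_nonneg _)]
    exact hbound.trans_lt ((Real.sqrt_lt' one_pos).mpr (by nlinarith))

section InnerProductSpace

variable {𝕜 E : Type*} [RCLike 𝕜] [NormedAddCommGroup E] [InnerProductSpace 𝕜 E] [CompleteSpace E]

theorem ContinuousLinearMap.norm_sq_add_norm_sq_of_mul_self_add_mul_self_eq_one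
    {S T : E →L[𝕜] E} (hS : IsSelfAdjoint S) (hT : IsSelfAdjoint T) (h : S * S + T * T = 1)
    (x : E) : ‖S x‖ ^ 2 + ‖T x‖ ^ 2 = ‖x‖ ^ 2 := by
  rw [apply_norm_sq_eq_inner_adjoint_left, apply_norm_sq_eq_inner_adjoint_left, hS.adjoint_eq,
    hT.adjoint_eq, ← map_add, ← inner_add_left, @norm_sq_eq_re_inner 𝕜]
  congr 2
  simpa using congr($h x)

namespace IsStarProjection

variable [FiniteDimensional 𝕜 E] {P Q : E →L[𝕜] E}

theorem injective_sub_iff_isCompl_range (hP : IsStarProjection P) (hQ : IsStarProjection Q) :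
    Function.Injective (P - Q) ↔
      IsCompl (LinearMap.range (P : E →ₗ[𝕜] E)) (LinearMap.range (Q : E →ₗ[𝕜] E)) := by
  have hker : LinearMap.ker (P : E →ₗ[𝕜] E) ⊓ LinearMap.ker (Q : E →ₗ[𝕜] E) =
      (LinearMap.range (P : E →ₗ[𝕜] E) ⊔ LinearMap.range (Q : E →ₗ[𝕜] E))ᗮ := by
    rw [← Submodule.inf_orthogonal, hP.isSelfAdjoint.isStarNormal.orthogonal_range,
      hQ.isSelfAdjoint.isStarNormal.orthogonal_range]
  rw [injective_iff_map_eq_zero]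
  constructor
  · intro hinj
    refine ⟨Submodule.disjoint_def.mpr fun x hxP hxQ => hinj x ?_, codisjoint_iff.mpr ?_⟩
    · have hPx : P x = x :=
        (LinearMap.IsIdempotentElem.mem_range_iff hP.isIdempotentElem.toLinearMap).mp hxP
      have hQx : Q x = x :=
        (LinearMap.IsIdempotentElem.mem_range_iff hQ.isIdempotentElem.toLinearMap).mp hxQ
      rw [sub_apply, hPx, hQx, sub_self]
    · refine Submodule.orthogonal_eq_bot_iff.mp ((Submodule.eq_bot_iff _).mpr fun x hx => hinj x ?_)
      rw [← hker] at hx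
      have hPx : P x = 0 := hx.1
      have hQx : Q x = 0 := hx.2
      rw [sub_apply, hPx, hQx, sub_self]
  · intro hPQ x hx
    have hPQx : P x = Q x := sub_eq_zero.mp hx
    have hPx : P x = 0 := Submodule.disjoint_def.mp hPQ.disjoint _ ⟨x, rfl⟩ ⟨x, hPQx.symm⟩
    have hx' : x ∈ LinearMap.ker (P : E →ₗ[𝕜] E) ⊓ LinearMap.ker (Q : E →ₗ[𝕜] E) :=
      ⟨hPx, (hPQx ▸ hPx : Q x = 0)⟩
    rwa [hker, hPQ.codisjoint.eq_top, Submodule.top_orthogonal_eq_bot] at hx'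

theorem norm_one_sub_sub_lt_one_iff_isCompl_range (hP : IsStarProjection P)
    (hQ : IsStarProjection Q) :
    ‖1 - P - Q‖ < 1 ↔
      IsCompl (LinearMap.range (P : E →ₗ[𝕜] E)) (LinearMap.range (Q : E →ₗ[𝕜] E)) := by
  have hsq := hP.isIdempotentElem.one_sub_sub_mul_self_add_sub_mul_self hQ.isIdempotentElem
  have hsa : IsSelfAdjoint (1 - P - Q) :=
    ((IsSelfAdjoint.one _).sub hP.isSelfAdjoint).sub hQ.isSelfAdjoint
  have hpyth := norm_sq_add_norm_sq_of_mul_self_add_mul_self_eq_one hsa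
    (hP.isSelfAdjoint.sub hQ.isSelfAdjoint) hsq
  exact (norm_lt_one_iff_injective_of_norm_sq_add_norm_sq_eq hpyth).trans
    (injective_sub_iff_isCompl_range hP hQ)

end IsStarProjection

theorem IsOrthProjOfRank.isStarProjection {n : ℕ} {P : E →L[𝕜] E} (hP : IsOrthProjOfRank n P) :
    IsStarProjection P :=
  ⟨hP.2.1, hP.1⟩

end InnerProductSpace

theorem stmt15_general {𝕜 H : Type*} [RCLike 𝕜] [NormedAddCommGroup H] [InnerProductSpace 𝕜 H]
    [CompleteSpace H] [FiniteDimensional 𝕜 H] (n : ℕ)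
    (hdim : Module.finrank 𝕜 H = 2 * n)
    (P Q : H →L[𝕜] H) (hP : IsOrthProjOfRank n P) (hQ : IsOrthProjOfRank n Q) :
    LinearMap.range (P : H →ₗ[𝕜] H) ⊔ LinearMap.range (Q : H →ₗ[𝕜] H) = ⊤ ↔ ‖(1 - P) - Q‖ < 1 := by
  rw [Submodule.sup_eq_top_iff_isCompl_of_finrank_add_eq (by rw [hP.2.2, hQ.2.2, hdim]; ring),
    hP.isStarProjection.norm_one_sub_sub_lt_one_iff_isCompl_range hQ.isStarProjection]

/-- On a `2n`-dimensional Hilbert space, rank-`n` projections `P, Q` are complementary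
(`im P + im Q = H`) iff `‖(I − P) − Q‖ < 1`. -/
theorem stmt15 {𝕜 H : Type*} [RCLike 𝕜] [NormedAddCommGroup H] [InnerProductSpace 𝕜 H]
    [CompleteSpace H] [FiniteDimensional 𝕜 H] (n : ℕ) (hn : 0 < n)
    (hdim : Module.finrank 𝕜 H = 2 * n)
    (P Q : H →L[𝕜] H) (hP : IsOrthProjOfRank n P) (hQ : IsOrthProjOfRank n Q) :
    LinearMap.range (P : H →ₗ[𝕜] H) ⊔ LinearMap.range (Q : H →ₗ[𝕜] H) = ⊤ ↔ ‖(1 - P) - Q‖ < 1 :=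
  stmt15_general n hdim P Q hP hQ
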